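/- arXiv:2512.02745 — 2 statements merged into one kernel-verified Lean document; each statement's English description precedes it below -/
import Mathlib

section
/- For any p > 1 and any L > 0, if f ∈ L¹(ℝ) ∩ L²(ℝ) and ∫_ℝ |x|^p |f(x)|² dx < ∞, then the COS tail energy B(L) := Σ_{k=0}^∞ (1/L) |∫_{ℝ\[-L,L]} f(x) cos(kπ(x+L)/(2L)) dx|² satisfies B(L) ≤ 2 ζ(p) ( L^{-p} ∫_{|x|>L} |x|^p |f(x)|² dx + ∫_{|x|>L} |f(x)|² dx ). -/
/-!
Cut `{|x| > L}` into the intervals `tile L m`, `m ≠ 0`, of length `2 L` centred at `2 m L`. On each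
of them the cosines `cos (k π (x + L) / (2 L))` are orthogonal with squared norms `L` or `2 L`, so by
Bessel's inequality the squares of their coefficients against `f` sum to at most `2 L ∫ f²` over the
tile. Since `|x| ≥ (2 |m| - 1) L` on `tile L m`, convexity of `t ↦ t ^ p` gives
`2 |m| ^ p ≤ (|x| / L) ^ p + 1` there. Cauchy–Schwarz over the tiles with the weights `|m| ^ (-p)`,
whose sum is `2 ζ(p)`, recombines the pieces.
-/

open MeasureTheory Real Set Function

theorem sum_sq_integral_mul_div_le {ι α : Type*} [MeasurableSpace α] {μ : Measure α}
    {e : ι → α → ℝ} {N : ι → ℝ} (he : ∀ i, MemLp (e i) 2 μ) (hN : ∀ i, 0 < N i)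
    (hnorm : ∀ i, ∫ x, e i x * e i x ∂μ = N i)
    (horth : Pairwise fun i j => ∫ x, e i x * e j x ∂μ = 0)
    {f : α → ℝ} (hf : MemLp f 2 μ) (s : Finset ι) :
    ∑ i ∈ s, (∫ x, f x * e i x ∂μ) ^ 2 / N i ≤ ∫ x, f x ^ 2 ∂μ := by
  have inner_toLp : ∀ {g h : α → ℝ} (hg : MemLp g 2 μ) (hh : MemLp h 2 μ),
      inner ℝ (hg.toLp g) (hh.toLp h) = ∫ x, g x * h x ∂μ := fun hg hh => by
    rw [L2.inner_def]
    refine integral_congr_ae ?_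
    filter_upwards [hg.coeFn_toLp, hh.coeFn_toLp] with x hgx hhx
    simp [hgx, hhx, mul_comm]
  set v : ι → Lp ℝ 2 μ := fun i => (√(N i))⁻¹ • (he i).toLp (e i)
  have hv : Orthonormal ℝ v := by
    classical
    rw [orthonormal_iff_ite]
    intro i j
    simp only [v, inner_smul_left, inner_smul_right, inner_toLp, RCLike.conj_to_real]
    split_ifs with hij
    · subst hij
      rw [hnorm, ← mul_assoc, ← mul_inv, mul_self_sqrt (hN i).le, inv_mul_cancel₀ (hN i).ne']
    · simp [horth hij]
  have bessel := hv.sum_inner_products_le (hf.toLp f) (s := s)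
  rw [← real_inner_self_eq_norm_sq, inner_toLp] at bessel
  simp only [v, inner_smul_left, inner_toLp, norm_eq_abs, sq_abs, RCLike.conj_to_real, mul_pow,
    inv_pow, sq_sqrt (hN _).le] at bessel
  convert bessel using 2 with i x
  · rw [mul_comm, div_eq_mul_inv]
    congr 2
    exact integral_congr_ae (ae_of_all _ fun x => mul_comm _ _)
  · exact funext fun x => sq (f x)

theorem sq_le_tsum_mul_tsum_of_sq_le_mul {ι : Type*} {u w v : ι → ℝ} {a : ℝ} (hu : HasSum u a)
    (hw : Summable w) (hv : Summable v) (hw0 : ∀ i, 0 ≤ w i) (hv0 : ∀ i, 0 ≤ v i)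
    (huv : ∀ i, u i ^ 2 ≤ w i * v i) : a ^ 2 ≤ (∑' i, w i) * ∑' i, v i :=
  le_of_tendsto' (hu.pow 2) fun s =>
    (Finset.sum_sq_le_sum_mul_sum_of_sq_le_mul s (fun i _ => hw0 i) (fun i _ => hv0 i)
      fun i _ => huv i).trans <|
    mul_le_mul (hw.sum_le_tsum s fun i _ => hw0 i) (hv.sum_le_tsum s fun i _ => hv0 i)
      (Finset.sum_nonneg fun i _ => hv0 i) (tsum_nonneg hw0)

theorem tsum_sq_le_tsum_mul_tsum_of_hasSum {κ ι : Type*} {a : κ → ι → ℝ} {A : κ → ℝ}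
    (hA : ∀ k, HasSum (a k) (A k)) {w G : ι → ℝ} (hw : Summable w) (hG : Summable G)
    (hw0 : ∀ i, 0 ≤ w i) (hG0 : ∀ i, 0 ≤ G i)
    (hbound : ∀ i (s : Finset κ), ∑ k ∈ s, a k i ^ 2 ≤ w i * G i) :
    ∑' k, A k ^ 2 ≤ (∑' i, w i) * ∑' i, G i := by
  have hdiv : ∀ i (s : Finset κ), ∑ k ∈ s, a k i ^ 2 / w i ≤ G i := fun i s => by
    rcases (hw0 i).eq_or_lt with hwi | hwi
    · simp [← hwi, hG0 i]
    · rw [← Finset.sum_div, div_le_iff₀' hwi]; exact hbound i s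
  have hdiv0 : ∀ i (s : Finset κ), 0 ≤ ∑ k ∈ s, a k i ^ 2 / w i := fun i s =>
    Finset.sum_nonneg fun k _ => div_nonneg (sq_nonneg _) (hw0 i)
  have hv : ∀ k, Summable fun i => a k i ^ 2 / w i := fun k =>
    hG.of_nonneg_of_le (fun i => by simpa using hdiv0 i {k}) fun i => by simpa using hdiv i {k}
  refine Real.tsum_le_of_sum_le (fun k => sq_nonneg _) fun s => ?_
  calc ∑ k ∈ s, A k ^ 2 ≤ ∑ k ∈ s, (∑' i, w i) * ∑' i, a k i ^ 2 / w i := by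
        refine Finset.sum_le_sum fun k _ => sq_le_tsum_mul_tsum_of_sq_le_mul (hA k) hw (hv k) hw0
          (fun i => div_nonneg (sq_nonneg _) (hw0 i)) fun i => ?_
        rcases (hw0 i).eq_or_lt with hwi | hwi
        · simpa [← hwi] using hbound i {k}
        · rw [mul_div_cancel₀ _ hwi.ne']
    _ = (∑' i, w i) * ∑' i, ∑ k ∈ s, a k i ^ 2 / w i := by
        rw [← Finset.mul_sum, Summable.tsum_finsetSum fun k _ => hv k]
    _ ≤ (∑' i, w i) * ∑' i, G i :=
        mul_le_mul_of_nonneg_left (Summable.tsum_le_tsum (hdiv · s)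
          (hG.of_nonneg_of_le (hdiv0 · s) (hdiv · s)) hG) (tsum_nonneg hw0)

theorem two_mul_rpow_le_rpow_two_mul_sub_one_add_one {p t : ℝ} (hp : 1 ≤ p) (ht : 1 / 2 ≤ t) :
    2 * t ^ p ≤ (2 * t - 1) ^ p + 1 := by
  have := (convexOn_rpow hp).2 (mem_Ici.2 (by linarith : (0 : ℝ) ≤ 2 * t - 1))
    (mem_Ici.2 zero_le_one) (by norm_num : (0 : ℝ) ≤ 1 / 2) (by norm_num : (0 : ℝ) ≤ 1 / 2)
    (by norm_num)
  simp only [smul_eq_mul, one_rpow] at this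
  rw [show 1 / 2 * (2 * t - 1) + 1 / 2 * 1 = t by ring] at this
  linarith

theorem tsum_abs_int_rpow_neg {p : ℝ} (hp : 1 < p) :
    ∑' m : ℤ, |(m : ℝ)| ^ (-p) = 2 * ∑' j : ℕ, ((j : ℝ) + 1) ^ (-p) := by
  have hs : Summable fun j : ℕ => ((j : ℝ) + 1) ^ (-p) := by
    simpa using (summable_nat_add_iff 1).2 (summable_nat_rpow.2 (by linarith : -p < -1))
  have hpos : (fun n : ℕ => |(((n : ℤ) + 1 : ℤ) : ℝ)| ^ (-p)) =
      fun j : ℕ => ((j : ℝ) + 1) ^ (-p) := by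
    ext n; push_cast; rw [abs_of_pos (by positivity)]
  have hneg : (fun n : ℕ => |((-((n : ℤ) + 1) : ℤ) : ℝ)| ^ (-p)) =
      fun j : ℕ => ((j : ℝ) + 1) ^ (-p) := by
    ext n; push_cast; rw [abs_neg, abs_of_pos (by positivity)]
  rw [tsum_of_add_one_of_neg_add_one (hpos ▸ hs) (hneg ▸ hs), hpos, hneg]
  simp [zero_rpow (by linarith : -p ≠ 0)]
  ring

theorem integral_cos_int_mul_pi (j m : ℤ) :
    ∫ y in (m : ℝ)..m + 1, cos (j * π * y) = if j = 0 then 1 else 0 := by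
  split_ifs with hj
  · simp [hj]
  have hc : (j : ℝ) * π ≠ 0 := mul_ne_zero (Int.cast_ne_zero.2 hj) pi_ne_zero
  rw [intervalIntegral.integral_comp_mul_left cos hc, integral_cos]
  have h1 : (j : ℝ) * π * (m + 1) = ((j * (m + 1) : ℤ) : ℝ) * π := by push_cast; ring
  have h2 : (j : ℝ) * π * m = ((j * m : ℤ) : ℝ) * π := by push_cast; ring
  rw [h1, h2, sin_int_mul_pi, sin_int_mul_pi, sub_zero, smul_zero]

theorem integral_cos_nat_mul_pi_mul_cos (k l : ℕ) (m : ℤ) :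
    ∫ y in (m : ℝ)..m + 1, cos (k * π * y) * cos (l * π * y) =
      ((if k = l then 1 else 0) + if k + l = 0 then 1 else 0) / 2 := by
  have hprod : ∀ y : ℝ, cos (k * π * y) * cos (l * π * y) =
      (cos (((k - l : ℤ) : ℝ) * π * y) + cos (((k + l : ℤ) : ℝ) * π * y)) / 2 := fun y => by
    have h := two_mul_cos_mul_cos (k * π * y) (l * π * y)
    push_cast
    rw [sub_mul, add_mul, sub_mul, add_mul, ← h]
    ring
  have hint : ∀ j : ℤ, IntervalIntegrable (fun y : ℝ => cos (j * π * y)) volume m (m + 1) :=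
    fun j => (continuous_cos.comp (continuous_const.mul continuous_id)).intervalIntegrable _ _
  simp only [hprod]
  rw [intervalIntegral.integral_div, intervalIntegral.integral_add (hint _) (hint _),
    integral_cos_int_mul_pi, integral_cos_int_mul_pi]
  congr 2
  · simp only [sub_eq_zero, Int.natCast_inj]
  · congr 1
    simp only [eq_iff_iff]
    omega

namespace CosTail

def tile (L : ℝ) (m : ℤ) : Set ℝ := Ioc ((2 * m - 1) * L) ((2 * m + 1) * L)

instance (L : ℝ) (m : ℤ) : IsFiniteMeasure (volume.restrict (tile L m)) := by
  rw [tile]; infer_instance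

theorem tile_eq (L : ℝ) (m : ℤ) :
    tile L m = Ioc (-L + m • (2 * L)) (-L + (m + 1) • (2 * L)) := by
  simp only [tile, zsmul_eq_mul]; push_cast; ring_nf

theorem iUnion_tile {L : ℝ} (hL : 0 < L) : ⋃ m, tile L m = univ := by
  simpa only [← tile_eq] using iUnion_Ioc_add_zsmul (mul_pos two_pos hL) (-L)

theorem pairwise_disjoint_tile (L : ℝ) : Pairwise (Disjoint on tile L) := by
  simpa only [← tile_eq] using pairwise_disjoint_Ioc_add_zsmul (-L) (2 * L)

theorem _root_.MeasureTheory.Integrable.hasSum_setIntegral_tile {L : ℝ} (hL : 0 < L)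
    {h : ℝ → ℝ} (hh : Integrable h) : HasSum (fun m => ∫ x in tile L m, h x) (∫ x, h x) := by
  rw [← setIntegral_univ, ← iUnion_tile hL]
  exact hasSum_integral_iUnion (fun m => measurableSet_Ioc) (pairwise_disjoint_tile L)
    hh.integrableOn

theorem setIntegral_tile_comp {L : ℝ} (hL : 0 < L) (m : ℤ) (F : ℝ → ℝ) :
    ∫ x in tile L m, F ((x + L) / (2 * L)) = 2 * L * ∫ y in (m : ℝ)..m + 1, F y := by
  have h2L : 2 * L ≠ 0 := by positivity
  have hle : (2 * m - 1) * L ≤ (2 * m + 1) * L := by nlinarith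
  have hF : ∀ x, F ((x + L) / (2 * L)) = F (x / (2 * L) + 1 / 2) := fun x => by
    congr 1; field_simp
  rw [tile, ← intervalIntegral.integral_of_le hle]
  simp only [hF]
  rw [intervalIntegral.integral_comp_div_add F h2L, smul_eq_mul]
  congr 2 <;> field_simp <;> ring

theorem integral_tile_cos_mul_cos {L : ℝ} (hL : 0 < L) (m : ℤ) (k l : ℕ) :
    ∫ x in tile L m, cos (k * π * (x + L) / (2 * L)) * cos (l * π * (x + L) / (2 * L)) =
      L * ((if k = l then 1 else 0) + if k + l = 0 then 1 else 0) := by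
  have := setIntegral_tile_comp hL m fun y => cos (k * π * y) * cos (l * π * y)
  simp only [mul_div_assoc] at this ⊢
  rw [this, integral_cos_nat_mul_pi_mul_cos]
  ring

theorem sum_sq_setIntegral_mul_cos_le {L : ℝ} (hL : 0 < L) (m : ℤ) {g : ℝ → ℝ}
    (hg : MemLp g 2 (volume.restrict (tile L m))) (s : Finset ℕ) :
    ∑ k ∈ s, (∫ x in tile L m, g x * cos (k * π * (x + L) / (2 * L))) ^ 2 ≤
      2 * L * ∫ x in tile L m, g x ^ 2 := by
  set N : ℕ → ℝ := fun k => L * (1 + if k + k = 0 then 1 else 0)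
  have hN : ∀ k, 0 < N k := fun k => by positivity
  have hN2 : ∀ k, N k ≤ 2 * L := fun k => by simp only [N]; split_ifs <;> linarith
  have hcos : ∀ k : ℕ, MemLp (fun x => cos (k * π * (x + L) / (2 * L))) 2
      (volume.restrict (tile L m)) := fun k =>
    MemLp.of_bound (by fun_prop) 1 (ae_of_all _ fun x => by simpa using abs_cos_le_one _)
  have bessel := sum_sq_integral_mul_div_le hcos hN
    (fun k => by rw [integral_tile_cos_mul_cos hL]; simp [N])
    (fun k l hkl => by simp only; rw [integral_tile_cos_mul_cos hL]; simp [hkl]; omega) hg s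
  calc _ ≤ ∑ k ∈ s, 2 * L *
        ((∫ x in tile L m, g x * cos (k * π * (x + L) / (2 * L))) ^ 2 / N k) :=
        Finset.sum_le_sum fun k _ => by
          rw [← mul_div_assoc, le_div_iff₀ (hN k), mul_comm]
          exact mul_le_mul_of_nonneg_right (hN2 k) (sq_nonneg _)
    _ ≤ _ := by rw [← Finset.mul_sum]; gcongr

theorem two_mul_abs_rpow_le_of_mem_tile {p L : ℝ} (hp : 1 ≤ p) (hL : 0 < L) {m : ℤ} {x : ℝ}
    (hx : x ∈ tile L m) : 2 * |(m : ℝ)| ^ p ≤ L ^ (-p) * |x| ^ p + 1 := by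
  rcases eq_or_ne m 0 with rfl | hm
  · simp only [Int.cast_zero, abs_zero, zero_rpow (by linarith : p ≠ 0), mul_zero]
    positivity
  have hm1 : (1 : ℝ) ≤ |(m : ℝ)| := by exact_mod_cast Int.one_le_abs hm
  have hxm : 2 * |(m : ℝ)| - 1 ≤ |x| / L := by
    rw [le_div_iff₀ hL]
    obtain ⟨h1, h2⟩ := hx
    rcases abs_cases (m : ℝ) with ⟨hma, -⟩ | ⟨hma, hneg⟩
    · rw [hma]; exact h1.le.trans (le_abs_self x)
    · have : (m : ℝ) ≤ -1 := by
        have : m < 0 := by exact_mod_cast hneg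
        exact_mod_cast (show m ≤ -1 by omega)
      rw [hma]; nlinarith [neg_le_abs x]
  calc 2 * |(m : ℝ)| ^ p ≤ (2 * |(m : ℝ)| - 1) ^ p + 1 :=
        two_mul_rpow_le_rpow_two_mul_sub_one_add_one hp (by linarith)
    _ ≤ (|x| / L) ^ p + 1 := by gcongr; linarith
    _ = L ^ (-p) * |x| ^ p + 1 := by
        rw [div_rpow (abs_nonneg x) hL.le, rpow_neg hL.le, div_eq_inv_mul]

theorem sum_sq_setIntegral_mul_cos_le_weighted {p L : ℝ} (hp : 1 ≤ p) (hL : 0 < L) (m : ℤ)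
    {g : ℝ → ℝ} (hg : MemLp g 2 (volume.restrict (tile L m)))
    (hmom : IntegrableOn (fun x => |x| ^ p * g x ^ 2) (tile L m))
    (hg0 : ∀ x ∈ tile L 0, g x = 0) (s : Finset ℕ) :
    ∑ k ∈ s, (∫ x in tile L m, g x * cos (k * π * (x + L) / (2 * L))) ^ 2 ≤
      |(m : ℝ)| ^ (-p) *
        (L * (L ^ (-p) * (∫ x in tile L m, |x| ^ p * g x ^ 2) + ∫ x in tile L m, g x ^ 2)) := by
  -- The central tile carries the weight `|0| ^ (-p) = 0`, harmless because `g` vanishes there.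
  rcases eq_or_ne m 0 with rfl | hm
  · have hA : ∀ k : ℕ, ∫ x in tile L 0, g x * cos (k * π * (x + L) / (2 * L)) = 0 := fun k =>
      setIntegral_eq_zero_of_forall_eq_zero fun x hx => by rw [hg0 x hx, zero_mul]
    simp [hA, zero_rpow (by linarith : -p ≠ 0)]
  have hm0 : 0 < |(m : ℝ)| := abs_pos.2 (Int.cast_ne_zero.2 hm)
  have hmoment : 2 * |(m : ℝ)| ^ p * ∫ x in tile L m, g x ^ 2 ≤
      L ^ (-p) * (∫ x in tile L m, |x| ^ p * g x ^ 2) + ∫ x in tile L m, g x ^ 2 := by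
    rw [← integral_const_mul, ← integral_const_mul, ← integral_add (hmom.const_mul _)
      hg.integrable_sq]
    refine setIntegral_mono_on (hg.integrable_sq.const_mul _)
      ((hmom.const_mul _).add hg.integrable_sq) measurableSet_Ioc fun x hx => ?_
    nlinarith [two_mul_abs_rpow_le_of_mem_tile hp hL hx, sq_nonneg (g x)]
  calc _ ≤ 2 * L * ∫ x in tile L m, g x ^ 2 := sum_sq_setIntegral_mul_cos_le hL m hg s
    _ = |(m : ℝ)| ^ (-p) * (L * (2 * |(m : ℝ)| ^ p * ∫ x in tile L m, g x ^ 2)) := by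
        rw [rpow_neg hm0.le]; field_simp
    _ ≤ _ := by gcongr

theorem tsum_sq_integral_mul_cos_le {p L : ℝ} (hp : 1 < p) (hL : 0 < L) {g : ℝ → ℝ}
    (hg1 : Integrable g) (hg2 : MemLp g 2) (hmom : Integrable fun x => |x| ^ p * g x ^ 2)
    (hg0 : ∀ x ∈ tile L 0, g x = 0) :
    ∑' k : ℕ, (∫ x, g x * cos (k * π * (x + L) / (2 * L))) ^ 2 ≤
      2 * (∑' j : ℕ, ((j : ℝ) + 1) ^ (-p)) *
        (L * (L ^ (-p) * (∫ x, |x| ^ p * g x ^ 2) + ∫ x, g x ^ 2)) := by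
  have hE := hg2.integrable_sq.hasSum_setIntegral_tile hL
  have hM := hmom.hasSum_setIntegral_tile hL
  have hcos : ∀ k : ℕ, Integrable fun x => g x * cos (k * π * (x + L) / (2 * L)) := fun k =>
    hg1.mul_bdd (by fun_prop) (ae_of_all _ fun x => by simpa using abs_cos_le_one _)
  rw [← tsum_abs_int_rpow_neg hp, ← hM.tsum_eq, ← hE.tsum_eq, ← tsum_mul_left,
    ← Summable.tsum_add (hM.summable.mul_left _) hE.summable, ← tsum_mul_left]
  exact tsum_sq_le_tsum_mul_tsum_of_hasSum (fun k => (hcos k).hasSum_setIntegral_tile hL)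
    (summable_abs_int_rpow hp) (((hM.summable.mul_left _).add hE.summable).mul_left L)
    (fun m => by positivity)
    (fun m => mul_nonneg hL.le (add_nonneg (mul_nonneg (by positivity)
      (integral_nonneg fun x => by positivity)) (integral_nonneg fun x => by positivity)))
    fun m => sum_sq_setIntegral_mul_cos_le_weighted hp.le hL m (hg2.restrict _)
      hmom.integrableOn hg0

end CosTail

open CosTail

theorem cos_tail_energy_moment_bound
    (p L : ℝ) (hp : 1 < p) (hL : 0 < L) (f : ℝ → ℝ)
    (hf1 : Integrable f) (hf2 : MemLp f 2 (volume : Measure ℝ))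
    (hmom : Integrable (fun x : ℝ => |x| ^ p * (f x) ^ 2)) :
    (∑' k : ℕ, (1 / L) *
        (∫ x in {x : ℝ | L < |x|},
          f x * Real.cos (k * Real.pi * (x + L) / (2 * L))) ^ 2)
      ≤ 2 * (∑' j : ℕ, ((j : ℝ) + 1) ^ (-p)) *
        (L ^ (-p) * (∫ x in {x : ℝ | L < |x|}, |x| ^ p * (f x) ^ 2)
          + ∫ x in {x : ℝ | L < |x|}, (f x) ^ 2) := by
  set S := {x : ℝ | L < |x|}
  have hS : MeasurableSet S := measurableSet_lt measurable_const continuous_abs.measurable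
  have hsq_ind : (fun x => S.indicator f x ^ 2) = S.indicator fun x => f x ^ 2 :=
    funext fun x => by by_cases hx : x ∈ S <;> simp [hx]
  have hmom_ind : (fun x => |x| ^ p * S.indicator f x ^ 2) =
      S.indicator fun x => |x| ^ p * f x ^ 2 := funext fun x => by
    rw [congrFun hsq_ind x, indicator_mul_right]
  have hg0 : ∀ x ∈ tile L 0, S.indicator f x = 0 := fun x hx => by
    simp only [tile, Int.cast_zero, mem_Ioc] at hx
    exact indicator_of_notMem (fun hxS => by
      simp only [S, mem_ofPred_eq, lt_abs] at hxS; rcases hxS with h | h <;> linarith) _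
  have key := tsum_sq_integral_mul_cos_le hp hL (hf1.indicator hS) (hf2.indicator hS)
    (hmom_ind ▸ hmom.indicator hS) hg0
  have hcos_ind : ∀ k : ℕ, (fun x => S.indicator f x * cos (k * π * (x + L) / (2 * L))) =
      S.indicator fun x => f x * cos (k * π * (x + L) / (2 * L)) := fun k =>
    funext fun x => (indicator_mul_left S f fun x => cos (k * π * (x + L) / (2 * L))).symm
  simp only [hcos_ind, hmom_ind, hsq_ind, integral_indicator hS] at key
  rw [tsum_mul_left]
  calc _ ≤ 1 / L * (2 * (∑' j : ℕ, ((j : ℝ) + 1) ^ (-p)) * (L * (L ^ (-p) *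
        (∫ x in S, |x| ^ p * f x ^ 2) + ∫ x in S, f x ^ 2))) := by gcongr
    _ = _ := by field_simp
end

section
/- If p > 1, f ∈ L¹(ℝ) ∩ L²(ℝ) and ∫_ℝ |x|^p |f(x)|² dx < ∞, then f is COS-admissible, i.e., B(L) → 0 as L → ∞. -/
/-!
Split the tail `g = f · 1_{|x| > L}` along the periods `J n = (4Ln - 2L, 4Ln + 2L]` of the
cosines and let `a k n` be the `k`-th coefficient of `g` on `J n`. Cauchy–Schwarz with the
weights `(|n| + 1) ^ p` gives `(Σ_n a k n)² ≤ W · Σ_n (|n| + 1) ^ p · (a k n)²` with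
`W = Σ_n (|n| + 1) ^ (-p) < ∞` since `p > 1`. Summing over `k`, Bessel's inequality on each period
gives `Σ_k (a k n)² ≤ 4L ∫_{J n} g²`, and `|x| ≥ L (|n| + 1)` on `J n ∩ {|x| > L}`; hence
`B(L) ≤ 4 W L ^ (-p) ∫ |x| ^ p f²`.
-/

open MeasureTheory Real Filter Set Function
open scoped ENNReal

theorem ENNReal.inner_le_weight_mul_Lp_tsum {ι : Type*} {p : ℝ} (hp : 1 ≤ p) (w f : ι → ℝ≥0∞) :
    ∑' i, w i * f i ≤ (∑' i, w i) ^ (1 - p⁻¹) * (∑' i, w i * f i ^ p) ^ p⁻¹ := by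
  have hp₀ : 0 ≤ p⁻¹ := inv_nonneg.2 (zero_le_one.trans hp)
  have hp₁ : 0 ≤ 1 - p⁻¹ := sub_nonneg.2 (inv_le_one_of_one_le₀ hp)
  rw [ENNReal.tsum_eq_iSup_sum]
  refine iSup_le fun s => (ENNReal.inner_le_weight_mul_Lp_of_nonneg s hp w f).trans ?_
  gcongr <;> exact ENNReal.sum_le_tsum s

theorem ofReal_sq_le_of_hasSum {ι : Type*} {a : ι → ℝ} {c : ℝ} (h : HasSum a c)
    {w : ι → ℝ} (hw : ∀ i, 0 < w i) :
    ENNReal.ofReal (c ^ 2) ≤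
      (∑' i, ENNReal.ofReal (w i)⁻¹) * ∑' i, ENNReal.ofReal (w i * a i ^ 2) := by
  have hc : ‖c‖ₑ ≤ ∑' i, ENNReal.ofReal (w i)⁻¹ * (ENNReal.ofReal (w i) * ‖a i‖ₑ) := by
    rw [← h.tsum_eq]
    refine enorm_tsum_le_tsum_enorm.trans_eq (tsum_congr fun i => ?_)
    rw [← mul_assoc, ← ENNReal.ofReal_mul (inv_nonneg.2 (hw i).le),
      inv_mul_cancel₀ (hw i).ne', ENNReal.ofReal_one, one_mul]
  have hterm : ∀ i, ENNReal.ofReal (w i)⁻¹ * (ENNReal.ofReal (w i) * ‖a i‖ₑ) ^ (2 : ℝ)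
      = ENNReal.ofReal (w i * a i ^ 2) := by
    intro i
    rw [ENNReal.rpow_two, Real.enorm_eq_ofReal_abs, ← ENNReal.ofReal_mul (hw i).le,
      ← ENNReal.ofReal_pow (mul_nonneg (hw i).le (abs_nonneg _)),
      ← ENNReal.ofReal_mul (inv_nonneg.2 (hw i).le)]
    congr 1
    field_simp
    rw [sq_abs]
  calc ENNReal.ofReal (c ^ 2) = ‖c‖ₑ ^ (2 : ℝ) := by
        rw [ENNReal.rpow_two, Real.enorm_eq_ofReal_abs, ← ENNReal.ofReal_pow (abs_nonneg c),
          sq_abs]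
    _ ≤ ((∑' i, ENNReal.ofReal (w i)⁻¹) ^ (1 - (2 : ℝ)⁻¹) *
          (∑' i, ENNReal.ofReal (w i)⁻¹ * (ENNReal.ofReal (w i) * ‖a i‖ₑ) ^ (2 : ℝ)) ^
            (2 : ℝ)⁻¹) ^ (2 : ℝ) :=
        ENNReal.rpow_le_rpow (hc.trans (ENNReal.inner_le_weight_mul_Lp_tsum one_le_two _ _))
          zero_le_two
    _ = (∑' i, ENNReal.ofReal (w i)⁻¹) * ∑' i, ENNReal.ofReal (w i * a i ^ 2) := by
        rw [ENNReal.mul_rpow_of_nonneg _ _ zero_le_two, ← ENNReal.rpow_mul, ← ENNReal.rpow_mul,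
          tsum_congr hterm]
        norm_num

theorem tsum_le_of_tsum_ofReal_le {ι : Type*} {u : ι → ℝ} {B : ℝ} (hu : ∀ i, 0 ≤ u i)
    (hB : 0 ≤ B) (h : ∑' i, ENNReal.ofReal (u i) ≤ ENNReal.ofReal B) : ∑' i, u i ≤ B :=
  calc ∑' i, u i = ∑' i, (ENNReal.ofReal (u i)).toReal :=
        tsum_congr fun i => (ENNReal.toReal_ofReal (hu i)).symm
    _ = (∑' i, ENNReal.ofReal (u i)).toReal :=
        (ENNReal.tsum_toReal_eq fun _ => ENNReal.ofReal_ne_top).symm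
    _ ≤ B := ENNReal.toReal_le_of_le_ofReal hB h

theorem abs_setIntegral_mul_cos_le_norm_fourierCoeffOn {a T : ℝ} (hT : 0 < T) {g : ℝ → ℝ}
    (hg : IntegrableOn g (Ioc a (a + T))) (k : ℤ) (ψ : ℝ) :
    |∫ x in Ioc a (a + T), g x * cos (2 * π * k * x / T + ψ)| ≤
      T * ‖fourierCoeffOn (lt_add_of_pos_right a hT) (fun x => (g x : ℂ)) (-k)‖ := by
  set e : ℝ → ℂ := fun x => Complex.exp ((2 * π * k * x / T : ℝ) * Complex.I)
  have hint : IntegrableOn (fun x => e x * g x) (Ioc a (a + T)) :=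
    hg.ofReal.bdd_mul (by fun_prop) (c := 1)
      (ae_of_all _ fun x => (Complex.norm_exp_ofReal_mul_I _).le)
  have hcoeff : (T : ℂ) * fourierCoeffOn (lt_add_of_pos_right a hT) (fun x => (g x : ℂ)) (-k)
      = ∫ x in Ioc a (a + T), e x * g x := by
    have hfourier : ∀ x : ℝ, fourier k (x : AddCircle T) = e x := fun x => by
      rw [fourier_coe_apply]; simp only [e]; push_cast; ring_nf
    rw [fourierCoeffOn_eq_integral, neg_neg, add_sub_cancel_left,
      intervalIntegral.integral_of_le (lt_add_of_pos_right a hT).le, ← Complex.coe_smul,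
      smul_eq_mul, ← mul_assoc, one_div, ← Complex.ofReal_mul, mul_inv_cancel₀ hT.ne',
      Complex.ofReal_one, one_mul]
    simp only [hfourier, smul_eq_mul]
  have hre : ∫ x in Ioc a (a + T), g x * cos (2 * π * k * x / T + ψ)
      = (Complex.exp (ψ * Complex.I) * ∫ x in Ioc a (a + T), e x * g x).re := by
    rw [← integral_const_mul, ← RCLike.re_eq_complex_re, ← integral_re (hint.const_mul _)]
    refine setIntegral_congr_fun measurableSet_Ioc fun x _ => ?_
    rw [RCLike.re_eq_complex_re, ← mul_assoc, ← Complex.exp_add, ← add_mul, ← Complex.ofReal_add,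
      Complex.re_mul_ofReal, Complex.exp_ofReal_mul_I_re, mul_comm, add_comm]
  rw [hre, ← hcoeff]
  refine (Complex.abs_re_le_norm _).trans_eq ?_
  rw [norm_mul, Complex.norm_exp_ofReal_mul_I, one_mul, norm_mul, Complex.norm_real,
    Real.norm_of_nonneg hT.le]

theorem tsum_ofReal_sq_setIntegral_mul_cos_le {a T : ℝ} (hT : 0 < T) {g : ℝ → ℝ}
    (hg : MemLp g 2 (volume.restrict (Ioc a (a + T)))) (ψ : ℕ → ℝ) :
    ∑' k : ℕ, ENNReal.ofReal ((∫ x in Ioc a (a + T), g x * cos (2 * π * k * x / T + ψ k)) ^ 2)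
      ≤ ENNReal.ofReal T * ∫⁻ x in Ioc a (a + T), ENNReal.ofReal (g x ^ 2) := by
  set c := fourierCoeffOn (lt_add_of_pos_right a hT) (fun x => (g x : ℂ))
  have hparseval : HasSum (fun n => ‖c n‖ ^ 2) (T⁻¹ * ∫ x in Ioc a (a + T), g x ^ 2) := by
    have h := hasSum_sq_fourierCoeffOn (lt_add_of_pos_right a hT) hg.ofReal
    rw [add_sub_cancel_left, intervalIntegral.integral_of_le (lt_add_of_pos_right a hT).le,
      smul_eq_mul] at h
    simp only [RCLike.norm_ofReal, sq_abs] at h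
    exact h
  have hbound : ∀ k : ℕ, (∫ x in Ioc a (a + T), g x * cos (2 * π * k * x / T + ψ k)) ^ 2
      ≤ T ^ 2 * ‖c (-k)‖ ^ 2 := fun k => by
    rw [← mul_pow, ← sq_abs]
    exact pow_le_pow_left₀ (abs_nonneg _) (by
      exact_mod_cast abs_setIntegral_mul_cos_le_norm_fourierCoeffOn hT
        (hg.integrable one_le_two) k (ψ k)) 2
  calc ∑' k : ℕ, ENNReal.ofReal ((∫ x in Ioc a (a + T), g x * cos (2 * π * k * x / T + ψ k)) ^ 2)
      ≤ ∑' k : ℕ, ENNReal.ofReal (T ^ 2) * ENNReal.ofReal (‖c (-k)‖ ^ 2) :=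
        ENNReal.tsum_le_tsum fun k => by
          rw [← ENNReal.ofReal_mul (sq_nonneg T)]
          exact ENNReal.ofReal_le_ofReal (hbound k)
    _ ≤ ENNReal.ofReal (T ^ 2) * ∑' n : ℤ, ENNReal.ofReal (‖c n‖ ^ 2) := by
        rw [ENNReal.tsum_mul_left]
        gcongr
        exact ENNReal.tsum_comp_le_tsum_of_injective (neg_injective.comp Nat.cast_injective)
          (fun n => ENNReal.ofReal (‖c n‖ ^ 2))
    _ = ENNReal.ofReal T * ∫⁻ x in Ioc a (a + T), ENNReal.ofReal (g x ^ 2) := by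
        rw [← ENNReal.ofReal_tsum_of_nonneg (fun n => by positivity) hparseval.summable,
          hparseval.tsum_eq, ← ENNReal.ofReal_mul (sq_nonneg T), ← mul_assoc, sq T,
          mul_inv_cancel_right₀ hT.ne', ENNReal.ofReal_mul hT.le,
          ofReal_integral_eq_lintegral_ofReal ((memLp_two_iff_integrable_sq hg.1).1 hg)
            (ae_of_all _ fun x => sq_nonneg _)]

theorem iUnion_Ioc_add_zsmul' {T : ℝ} (hT : 0 < T) (a : ℝ) :
    ⋃ n : ℤ, Ioc (a + n • T) (a + n • T + T) = univ := by
  simpa only [add_one_zsmul, ← add_assoc] using iUnion_Ioc_add_zsmul hT a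

theorem pairwise_disjoint_Ioc_add_zsmul' (a T : ℝ) :
    Pairwise (Disjoint on fun n : ℤ => Ioc (a + n • T) (a + n • T + T)) := by
  simpa only [add_one_zsmul, ← add_assoc] using pairwise_disjoint_Ioc_add_zsmul a T

theorem hasSum_setIntegral_Ioc_add_zsmul {E : Type*} [NormedAddCommGroup E] [NormedSpace ℝ E]
    {T : ℝ} (hT : 0 < T) (a : ℝ) {f : ℝ → E} (hf : Integrable f) :
    HasSum (fun n : ℤ => ∫ x in Ioc (a + n • T) (a + n • T + T), f x) (∫ x, f x) := by
  rw [← setIntegral_univ, ← iUnion_Ioc_add_zsmul' hT a]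
  exact hasSum_integral_iUnion (fun _ => measurableSet_Ioc)
    (pairwise_disjoint_Ioc_add_zsmul' a T) hf.integrableOn

theorem tsum_setLIntegral_Ioc_add_zsmul {T : ℝ} (hT : 0 < T) (a : ℝ) (f : ℝ → ℝ≥0∞) :
    ∑' n : ℤ, ∫⁻ x in Ioc (a + n • T) (a + n • T + T), f x = ∫⁻ x, f x := by
  rw [← lintegral_iUnion (fun _ => measurableSet_Ioc) (pairwise_disjoint_Ioc_add_zsmul' a T),
    iUnion_Ioc_add_zsmul' hT a, Measure.restrict_univ]

theorem tsum_ofReal_sq_integral_mul_cos_le {T : ℝ} (hT : 0 < T) (a : ℝ) {g : ℝ → ℝ}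
    (hg₁ : Integrable g) (hg₂ : MemLp g 2) (ψ : ℕ → ℝ) {w : ℤ → ℝ} (hw : ∀ n, 0 < w n) :
    ∑' k : ℕ, ENNReal.ofReal ((∫ x, g x * cos (2 * π * k * x / T + ψ k)) ^ 2) ≤
      (∑' n, ENNReal.ofReal (w n)⁻¹) * (ENNReal.ofReal T * ∑' n : ℤ, ENNReal.ofReal (w n) *
        ∫⁻ x in Ioc (a + n • T) (a + n • T + T), ENNReal.ofReal (g x ^ 2)) := by
  set J : ℤ → Set ℝ := fun n => Ioc (a + n • T) (a + n • T + T)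
  have hcs : ∀ k : ℕ, ENNReal.ofReal ((∫ x, g x * cos (2 * π * k * x / T + ψ k)) ^ 2) ≤
      (∑' n, ENNReal.ofReal (w n)⁻¹) * ∑' n, ENNReal.ofReal (w n) *
        ENNReal.ofReal ((∫ x in J n, g x * cos (2 * π * k * x / T + ψ k)) ^ 2) := fun k => by
    simp_rw [← ENNReal.ofReal_mul (hw _).le]
    refine ofReal_sq_le_of_hasSum (hasSum_setIntegral_Ioc_add_zsmul hT a ?_) hw
    exact hg₁.mul_bdd (by fun_prop) (c := 1) (ae_of_all _ fun x => by
      simpa only [Real.norm_eq_abs] using abs_cos_le_one _)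
  calc ∑' k : ℕ, ENNReal.ofReal ((∫ x, g x * cos (2 * π * k * x / T + ψ k)) ^ 2)
      ≤ ∑' k : ℕ, (∑' n, ENNReal.ofReal (w n)⁻¹) * ∑' n, ENNReal.ofReal (w n) *
          ENNReal.ofReal ((∫ x in J n, g x * cos (2 * π * k * x / T + ψ k)) ^ 2) :=
        ENNReal.tsum_le_tsum hcs
    _ = (∑' n, ENNReal.ofReal (w n)⁻¹) * ∑' n, ENNReal.ofReal (w n) * ∑' k : ℕ,
          ENNReal.ofReal ((∫ x in J n, g x * cos (2 * π * k * x / T + ψ k)) ^ 2) := by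
        simp_rw [ENNReal.tsum_mul_left]
        rw [ENNReal.tsum_comm]
        simp_rw [ENNReal.tsum_mul_left]
    _ ≤ (∑' n, ENNReal.ofReal (w n)⁻¹) * ∑' n, ENNReal.ofReal (w n) *
          (ENNReal.ofReal T * ∫⁻ x in J n, ENNReal.ofReal (g x ^ 2)) := by
        gcongr with n
        exact tsum_ofReal_sq_setIntegral_mul_cos_le hT (hg₂.restrict _) ψ
    _ = _ := by
        congr 1
        simp_rw [mul_left_comm _ (ENNReal.ofReal T), ENNReal.tsum_mul_left]
        rfl

theorem summable_inv_abs_add_one_rpow {p : ℝ} (hp : 1 < p) :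
    Summable fun n : ℤ => ((|(n : ℝ)| + 1) ^ p)⁻¹ := by
  have h : Summable fun n : ℕ => ((|(n : ℝ)| + 1) ^ p)⁻¹ := by
    refine ((summable_one_div_nat_add_rpow 1 p).2 hp).congr fun n => ?_
    rw [Nat.abs_cast, abs_of_pos n.cast_add_one_pos, one_div]
  exact summable_int_iff_summable_nat_and_neg.2 ⟨by simpa using h, by simpa using h⟩

theorem mul_abs_add_one_le_abs {L x : ℝ} {n : ℤ} (hL : 0 < L)
    (hx : x ∈ Ioc (-2 * L + n • (4 * L)) (-2 * L + n • (4 * L) + 4 * L)) (hLx : L < |x|) :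
    L * (|(n : ℝ)| + 1) ≤ |x| := by
  rw [zsmul_eq_mul, mem_Ioc] at hx
  rcases lt_trichotomy n 0 with hn | rfl | hn
  · have hn' : (n : ℝ) ≤ -1 := by exact_mod_cast Int.le_sub_one_of_lt hn
    rw [abs_of_neg (by linarith), abs_of_neg (by nlinarith)]
    nlinarith
  · simpa using hLx.le
  · have hn' : (1 : ℝ) ≤ n := by exact_mod_cast hn
    rw [abs_of_pos (by linarith), abs_of_pos (by nlinarith)]
    nlinarith

theorem abs_add_one_rpow_mul_sq_indicator_le {L p x : ℝ} {n : ℤ} (hL : 0 < L) (hp : 0 ≤ p)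
    (f : ℝ → ℝ) (hx : x ∈ Ioc (-2 * L + n • (4 * L)) (-2 * L + n • (4 * L) + 4 * L)) :
    (|(n : ℝ)| + 1) ^ p * {y : ℝ | L < |y|}.indicator f x ^ 2 ≤ L ^ (-p) * (|x| ^ p * f x ^ 2) := by
  by_cases hLx : L < |x|
  · rw [indicator_of_mem (show x ∈ {y : ℝ | L < |y|} from hLx), ← mul_assoc]
    gcongr
    calc (|(n : ℝ)| + 1) ^ p = L ^ (-p) * (L * (|(n : ℝ)| + 1)) ^ p := by
          rw [mul_rpow hL.le (by positivity), ← mul_assoc, ← rpow_add hL, neg_add_cancel,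
            rpow_zero, one_mul]
      _ ≤ L ^ (-p) * |x| ^ p := by gcongr; exact mul_abs_add_one_le_abs hL hx hLx
  · rw [indicator_of_notMem (show x ∉ {y : ℝ | L < |y|} from hLx)]
    simp only [ne_eq, OfNat.ofNat_ne_zero, not_false_eq_true, zero_pow, mul_zero]
    positivity

theorem ofReal_mul_setLIntegral_sq_indicator_le {L p : ℝ} (hL : 0 < L) (hp : 0 ≤ p)
    (f : ℝ → ℝ) (n : ℤ) :
    ENNReal.ofReal ((|(n : ℝ)| + 1) ^ p) *
      ∫⁻ x in Ioc (-2 * L + n • (4 * L)) (-2 * L + n • (4 * L) + 4 * L),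
        ENNReal.ofReal ({y : ℝ | L < |y|}.indicator f x ^ 2) ≤
      ENNReal.ofReal (L ^ (-p)) *
        ∫⁻ x in Ioc (-2 * L + n • (4 * L)) (-2 * L + n • (4 * L) + 4 * L),
          ENNReal.ofReal (|x| ^ p * f x ^ 2) := by
  rw [← lintegral_const_mul' _ _ ENNReal.ofReal_ne_top,
    ← lintegral_const_mul' _ _ ENNReal.ofReal_ne_top]
  refine setLIntegral_mono' measurableSet_Ioc fun x hx => ?_
  rw [← ENNReal.ofReal_mul (by positivity), ← ENNReal.ofReal_mul (by positivity)]
  exact ENNReal.ofReal_le_ofReal (abs_add_one_rpow_mul_sq_indicator_le hL hp f hx)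

theorem tsum_sq_setIntegral_abs_gt_mul_cos_le {p L : ℝ} (hp : 1 < p) (hL : 0 < L) {f : ℝ → ℝ}
    (hf₁ : Integrable f) (hf₂ : MemLp f 2) (hmom : Integrable fun x => |x| ^ p * f x ^ 2) :
    ∑' k : ℕ, (1 / L) * (∫ x in {x : ℝ | L < |x|}, f x * cos (k * π * (x + L) / (2 * L))) ^ 2 ≤
      4 * (∑' n : ℤ, ((|(n : ℝ)| + 1) ^ p)⁻¹) * (∫ x, |x| ^ p * f x ^ 2) * L ^ (-p) := by
  set tail := {x : ℝ | L < |x|}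
  have htail : MeasurableSet tail := measurableSet_lt measurable_const measurable_abs
  set W := ∑' n : ℤ, ((|(n : ℝ)| + 1) ^ p)⁻¹
  set M := ∫ x, |x| ^ p * f x ^ 2
  have hW : ENNReal.ofReal W = ∑' n : ℤ, ENNReal.ofReal ((|(n : ℝ)| + 1) ^ p)⁻¹ :=
    ENNReal.ofReal_tsum_of_nonneg (fun n => by positivity) (summable_inv_abs_add_one_rpow hp)
  have hM : ENNReal.ofReal M = ∫⁻ x, ENNReal.ofReal (|x| ^ p * f x ^ 2) :=
    ofReal_integral_eq_lintegral_ofReal hmom (ae_of_all _ fun x => by positivity)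
  have hphase : ∀ (k : ℕ) (x : ℝ),
      k * π * (x + L) / (2 * L) = 2 * π * k * x / (4 * L) + k * π / 2 := fun k x => by
    field_simp
    ring
  have hcoeff : ∀ k : ℕ, ∫ x in tail, f x * cos (k * π * (x + L) / (2 * L))
      = ∫ x, tail.indicator f x * cos (2 * π * k * x / (4 * L) + k * π / 2) := fun k => by
    simp_rw [← hphase, ← integral_indicator htail, indicator_mul_left]
  have hbound : ∑' k : ℕ, ENNReal.ofReal
      ((1 / L) * (∫ x in tail, f x * cos (k * π * (x + L) / (2 * L))) ^ 2) ≤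
      ENNReal.ofReal (4 * W * M * L ^ (-p)) := by
    simp_rw [ENNReal.ofReal_mul (one_div_pos.2 hL).le, ENNReal.tsum_mul_left, hcoeff]
    calc ENNReal.ofReal (1 / L) * ∑' k : ℕ, ENNReal.ofReal
          ((∫ x, tail.indicator f x * cos (2 * π * k * x / (4 * L) + k * π / 2)) ^ 2)
        ≤ ENNReal.ofReal (1 / L) * (ENNReal.ofReal W * (ENNReal.ofReal (4 * L) *
            ∑' n : ℤ, ENNReal.ofReal (L ^ (-p)) *
              ∫⁻ x in Ioc (-2 * L + n • (4 * L)) (-2 * L + n • (4 * L) + 4 * L),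
                ENNReal.ofReal (|x| ^ p * f x ^ 2))) := by
          rw [hW]
          gcongr
          refine (tsum_ofReal_sq_integral_mul_cos_le (by positivity) (-2 * L)
            (hf₁.indicator htail) (hf₂.indicator htail) (fun k => k * π / 2)
            (w := fun n : ℤ => (|(n : ℝ)| + 1) ^ p) (fun n => by positivity)).trans ?_
          gcongr _ * (_ * ∑' n, ?_) with n
          exact ofReal_mul_setLIntegral_sq_indicator_le hL (zero_le_one.trans hp.le) f n
      _ = ENNReal.ofReal (4 * W * M * L ^ (-p)) := by
          rw [ENNReal.tsum_mul_left, tsum_setLIntegral_Ioc_add_zsmul (by positivity), ← hM,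
            ← ENNReal.ofReal_mul (by positivity), ← ENNReal.ofReal_mul (by positivity),
            ← ENNReal.ofReal_mul (by positivity), ← ENNReal.ofReal_mul (by positivity)]
          congr 1
          field_simp
  exact tsum_le_of_tsum_ofReal_le (fun k => by positivity) (by positivity) hbound

theorem cos_admissible_of_moment
    (p : ℝ) (hp : 1 < p) (f : ℝ → ℝ)
    (hf1 : Integrable f) (hf2 : MemLp f 2 (volume : Measure ℝ))
    (hmom : Integrable (fun x : ℝ => |x| ^ p * (f x) ^ 2)) :
    Tendsto (fun L : ℝ => ∑' k : ℕ, (1 / L) *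
        (∫ x in {x : ℝ | L < |x|},
          f x * Real.cos (k * Real.pi * (x + L) / (2 * L))) ^ 2)
      atTop (nhds 0) := by
  have hdecay : Tendsto (fun L : ℝ => 4 * (∑' n : ℤ, ((|(n : ℝ)| + 1) ^ p)⁻¹) *
      (∫ x, |x| ^ p * f x ^ 2) * L ^ (-p)) atTop (nhds 0) := by
    simpa using (tendsto_rpow_neg_atTop (zero_lt_one.trans hp)).const_mul
      (4 * (∑' n : ℤ, ((|(n : ℝ)| + 1) ^ p)⁻¹) * ∫ x, |x| ^ p * f x ^ 2)
  refine squeeze_zero' ?_ ?_ hdecay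
  · filter_upwards [eventually_gt_atTop 0] with L hL
    exact tsum_nonneg fun k => by positivity
  · filter_upwards [eventually_gt_atTop 0] with L hL
    exact tsum_sq_setIntegral_abs_gt_mul_cos_le hp hL hf1 hf2 hmom
end
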